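/- arXiv:1610.01462 — 2 statements merged into one kernel-verified Lean document; each statement's English description precedes it below -/
import Mathlib

section
/- For every real number t > 0, one has the identity Re(G(t)·Γ(it)) = (4/π^{3/2}) · |Γ(3/4 + it/2)|² · cosh(πt/2) · Q(t)/(2t). -/
/-!
Write `x + i y = ∫₀¹ s^{it} (1 - s)^{1/2} ds = B(1 + it, 3/2)`; its real and imaginary parts are the
two integrals in `Q`. The beta relation `Γ(1 + it) Γ(3/2) = Γ(5/2 + it) B(1 + it, 3/2)`, shifted down
by one in both Gamma factors, gives `Γ(it) / Γ(3/2 + it) = 2 (3/2 + it)(x + i y) / (it √π)`, and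
`cos(iπt/2 - π/4) = (cosh(πt/2) + i sinh(πt/2)) / √2`. Hence `G(t) Γ(it)` is a positive real multiple
of `(cosh + i sinh)(3/2 + it)(x + i y) / (it)`, whose real part is `cosh(πt/2) Q(t) / (2t)`.
-/

/-- The function `G(t) = (2√2/π) · |Γ(3/4 + it/2)|² · cos(iπt/2 − π/4) / Γ(3/2 + it)`. -/
noncomputable def G (t : ℝ) : ℂ :=
  ((2 * Real.sqrt 2 / Real.pi : ℝ) : ℂ) *
    ((‖Complex.Gamma (3 / 4 + Complex.I * t / 2)‖ : ℝ) : ℂ) ^ 2 *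
    Complex.cos (Complex.I * Real.pi * t / 2 - Real.pi / 4) /
    Complex.Gamma (3 / 2 + Complex.I * t)

/-- The function
`Q(t) = (∫₀¹ cos(t log s)(1−s)^{1/2} ds)(2t + 3 tanh(πt/2))
      + (∫₀¹ sin(t log s)(1−s)^{1/2} ds)(3 − 2t tanh(πt/2))`. -/
noncomputable def Q (t : ℝ) : ℝ :=
  (∫ s in (0:ℝ)..1, Real.cos (t * Real.log s) * Real.sqrt (1 - s)) *
    (2 * t + 3 * Real.tanh (Real.pi * t / 2)) +
  (∫ s in (0:ℝ)..1, Real.sin (t * Real.log s) * Real.sqrt (1 - s)) *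
    (3 - 2 * t * Real.tanh (Real.pi * t / 2))

open Complex

lemma Complex.ofReal_cpow_I_mul {s : ℝ} (hs : 0 < s) (t : ℝ) :
    (s : ℂ) ^ (I * t) = Real.cos (t * Real.log s) + Real.sin (t * Real.log s) * I := by
  rw [cpow_def_of_ne_zero (ofReal_ne_zero.2 hs.ne'), ← ofReal_log hs.le,
    show (Real.log s : ℂ) * (I * t) = (t * Real.log s : ℝ) * I by push_cast; ring,
    exp_mul_I, ofReal_cos, ofReal_sin]

lemma Complex.one_sub_ofReal_cpow_three_halves_sub_one {s : ℝ} (hs : s ≤ 1) :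
    (1 - (s : ℂ)) ^ (3 / 2 - 1 : ℂ) = Real.sqrt (1 - s) := by
  rw [Real.sqrt_eq_rpow, ofReal_cpow (by linarith)]
  push_cast
  norm_num

lemma Complex.betaIntegral_one_add_I_mul_three_halves (t : ℝ) :
    betaIntegral (1 + I * t) (3 / 2) =
      (∫ s in (0:ℝ)..1, Real.cos (t * Real.log s) * Real.sqrt (1 - s) : ℝ) +
        (∫ s in (0:ℝ)..1, Real.sin (t * Real.log s) * Real.sqrt (1 - s) : ℝ) * I := by
  have hint := betaIntegral_convergent (u := 1 + I * t) (v := 3 / 2) (by simp) (by norm_num)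
  have integrand : ∀ᵐ s, s ∈ Set.uIoc (0:ℝ) 1 →
      (s : ℂ) ^ (1 + I * t - 1) * (1 - (s : ℂ)) ^ (3 / 2 - 1 : ℂ) =
        (Real.cos (t * Real.log s) * Real.sqrt (1 - s) : ℝ) +
          (Real.sin (t * Real.log s) * Real.sqrt (1 - s) : ℝ) * I := by
    refine Filter.Eventually.of_forall fun s hs => ?_
    rw [Set.uIoc_of_le zero_le_one] at hs
    rw [add_sub_cancel_left, ofReal_cpow_I_mul hs.1, one_sub_ofReal_cpow_three_halves_sub_one hs.2]
    push_cast
    ring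
  apply Complex.ext
  · rw [betaIntegral, ← RCLike.re_to_complex, ← intervalIntegral.intervalIntegral_re hint,
      intervalIntegral.integral_congr_ae (integrand.mono fun s h hs => congrArg RCLike.re (h hs))]
    simp [-ofReal_mul, -ofReal_cos, -ofReal_sin]
  · rw [betaIntegral, ← RCLike.im_to_complex, ← intervalIntegral.intervalIntegral_im hint,
      intervalIntegral.integral_congr_ae (integrand.mono fun s h hs => congrArg RCLike.im (h hs))]
    simp [-ofReal_mul, -ofReal_cos, -ofReal_sin]

lemma Complex.Gamma_three_halves : Gamma (3 / 2) = Real.sqrt Real.pi / 2 := by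
  have := Real.Gamma_nat_add_one_add_half 0
  norm_num at this
  rw [show (3 / 2 : ℂ) = ((3 / 2 : ℝ) : ℂ) by push_cast; ring, Gamma_ofReal, this]
  push_cast
  ring

lemma Complex.mul_Gamma_mul_Gamma_eq_betaIntegral {s v : ℂ} (hs : s ≠ 0) (hs' : 0 < (s + 1).re)
    (hv : 0 < v.re) (hsv : s + v ≠ 0) :
    s * Gamma s * Gamma v = (s + v) * Gamma (s + v) * betaIntegral (s + 1) v := by
  rw [← Gamma_add_one s hs, ← Gamma_add_one _ hsv, add_right_comm,
    Gamma_mul_Gamma_eq_betaIntegral hs' hv]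

lemma Complex.cos_I_mul_sub_pi_div_four (z : ℂ) :
    cos (I * z - Real.pi / 4) = Real.sqrt 2 / 2 * (cosh z + sinh z * I) := by
  rw [cos_sub, mul_comm I, cos_mul_I, sin_mul_I, ← ofReal_ofNat, ← ofReal_div, ← ofReal_cos,
    ← ofReal_sin, Real.cos_pi_div_four, Real.sin_pi_div_four]
  push_cast
  ring

lemma Complex.Gamma_I_mul_eq {t : ℝ} (ht : t ≠ 0) :
    Gamma (I * t) = 2 * (3 / 2 + I * t) * Gamma (3 / 2 + I * t) *
      betaIntegral (1 + I * t) (3 / 2) / (I * t * Real.sqrt Real.pi) := by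
  have hIt : I * t ≠ 0 := mul_ne_zero I_ne_zero (ofReal_ne_zero.2 ht)
  have hβ := mul_Gamma_mul_Gamma_eq_betaIntegral (v := 3 / 2) hIt (by simp) (by norm_num)
    (fun h => by simpa using congrArg re h)
  rw [Gamma_three_halves, add_comm _ (3 / 2 : ℂ), add_comm _ (1 : ℂ)] at hβ
  rw [eq_div_iff (mul_ne_zero hIt (ofReal_ne_zero.2 (Real.sqrt_pos.2 Real.pi_pos).ne'))]
  linear_combination 2 * hβ

lemma G_mul_Gamma_I_mul {t : ℝ} (ht : t ≠ 0) :
    G t * Gamma (I * t) =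
      (4 / (Real.pi * Real.sqrt Real.pi * t) * ‖Gamma (3 / 4 + I * t / 2)‖ ^ 2 : ℝ) *
        ((Real.cosh (Real.pi * t / 2) + Real.sinh (Real.pi * t / 2) * I) * (3 / 2 + I * t) *
          betaIntegral (1 + I * t) (3 / 2) * -I) := by
  have hcos : cos (I * Real.pi * t / 2 - Real.pi / 4) =
      Real.sqrt 2 / 2 * (Real.cosh (Real.pi * t / 2) + Real.sinh (Real.pi * t / 2) * I) := by
    rw [show I * Real.pi * t / 2 = I * (Real.pi * t / 2 : ℝ) by push_cast; ring,
      cos_I_mul_sub_pi_div_four, ← ofReal_cosh, ← ofReal_sinh]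
  have hD : Gamma (3 / 2 + I * t) ≠ 0 := Gamma_ne_zero_of_re_pos (by simp)
  have hsqrt2 : (Real.sqrt 2 : ℂ) ^ 2 = 2 := by norm_cast; simp
  rw [G, hcos, Gamma_I_mul_eq ht]
  generalize Gamma (3 / 2 + I * t) = D at hD ⊢
  push_cast
  field_simp
  rw [hsqrt2, I_sq]
  ring

lemma Real.rpow_three_halves {x : ℝ} (hx : 0 ≤ x) : x ^ (3 / 2 : ℝ) = x * Real.sqrt x := by
  rw [show (3 / 2 : ℝ) = 1 + 1 / 2 by norm_num, Real.rpow_add' hx (by norm_num), Real.rpow_one,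
    Real.sqrt_eq_rpow]

/-- For `t > 0`,
`Re(G(t)·Γ(it)) = (4/π^{3/2}) · |Γ(3/4 + it/2)|² · cosh(πt/2) · Q(t)/(2t)`. -/
theorem re_G_mul_Gamma_eq (t : ℝ) (ht : 0 < t) :
    (G t * Complex.Gamma (Complex.I * t)).re =
      4 / Real.pi ^ ((3:ℝ)/2) *
        ‖Complex.Gamma (3 / 4 + Complex.I * t / 2)‖ ^ 2 *
        Real.cosh (Real.pi * t / 2) * (Q t / (2 * t)) := by
  rw [G_mul_Gamma_I_mul ht.ne', re_ofReal_mul, betaIntegral_one_add_I_mul_three_halves]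
  set x := ∫ s in (0:ℝ)..1, Real.cos (t * Real.log s) * Real.sqrt (1 - s)
  set y := ∫ s in (0:ℝ)..1, Real.sin (t * Real.log s) * Real.sqrt (1 - s)
  set ch := Real.cosh (Real.pi * t / 2)
  set sh := Real.sinh (Real.pi * t / 2)
  have hre : ((ch + sh * I) * (3 / 2 + I * t) * (x + y * I) * -I : ℂ).re =
      x * (t * ch + 3 / 2 * sh) + y * (3 / 2 * ch - t * sh) := by
    simp [mul_re, mul_im]
    ring
  rw [hre, Q, Real.rpow_three_halves Real.pi_pos.le, Real.tanh_eq_sinh_div_cosh]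
  field_simp
  ring
end

section
/- If f : (−∞, 0) → ℝ is a continuous and strictly decreasing function such that the function x ↦ f(x)·sin(x) is Lebesgue integrable on (−∞, 0), then ∫_{−∞}^{0} f(x)·sin(x) dx > 0. -/
open MeasureTheory Real Set

private lemma block_pos (f : ℝ → ℝ)
    (hd : StrictAntiOn f (Set.Iio 0))
    (hi : IntegrableOn (fun x => f x * Real.sin x) (Set.Iio 0)) (k : ℕ) :
    0 < ∫ x in (-(2*π*(k+1)))..(-(2*π*k)), f x * Real.sin x := by
  have hπ : (0:ℝ) < π := Real.pi_pos
  set h : ℝ → ℝ := fun x => f x * Real.sin x with hh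
  set a : ℝ := -(2*π*(k+1)) with ha
  set b : ℝ := -(2*π*k) with hb
  have hb0 : b ≤ 0 := by
    simp only [hb, neg_nonpos]
    positivity
  set m : ℝ := a + π with hm
  have hmb : m + π = b := by simp only [hm, ha, hb]; ring
  have ham : a < m := by simp [hm]; linarith
  have hm0 : m + π ≤ 0 := by rw [hmb]; exact hb0
  have hIic : IntegrableOn h (Iic 0) :=
    hi.congr_set_ae Iio_ae_eq_Iic.symm
  have hint2 : IntervalIntegrable h volume m b := by
    rw [intervalIntegrable_iff]
    exact hIic.mono_set (fun x hx => le_trans (uIoc_subset_uIcc hx).2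
      (by rw [max_eq_right (by linarith)]; exact hb0))
  have hint1 : IntervalIntegrable h volume a m := by
    rw [intervalIntegrable_iff]
    exact hIic.mono_set (fun x hx => le_trans (uIoc_subset_uIcc hx).2
      (by rw [max_eq_right ham.le]; linarith))
  have hint1' : IntervalIntegrable (fun y => h (y + π)) volume a m := by
    have := hint2.comp_add_right π
    have e1 : m - π = a := by simp [hm]
    have e2 : b - π = m := by rw [← hmb]; ring
    rwa [e1, e2] at this
  have hsplit : (∫ x in a..b, h x) = (∫ x in a..m, h x) + ∫ x in m..b, h x :=
    (intervalIntegral.integral_add_adjacent_intervals hint1 hint2).symm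
  have hshift : (∫ x in m..b, h x) = ∫ y in a..m, h (y + π) := by
    rw [intervalIntegral.integral_comp_add_right h π, hm, hmb]
  have hcomb : (∫ x in a..b, h x) = ∫ y in a..m, (h y + h (y + π)) := by
    rw [hsplit, hshift, intervalIntegral.integral_add hint1 hint1']
  have key : 0 < ∫ y in a..m, (h y + h (y + π)) := by
    apply intervalIntegral.intervalIntegral_pos_of_pos_on (hint1.add hint1') _ ham
    intro y hy
    have hy1 : a < y := hy.1
    have hy2 : y < m := hy.2
    have hsin : Real.sin (y + π) = -Real.sin y := Real.sin_add_pi y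
    have hsinpos : 0 < Real.sin y := by
      have : Real.sin y = Real.sin (y + (k+1 : ℕ) * (2*π)) :=
        (Real.sin_add_nat_mul_two_pi y (k+1)).symm
      rw [this]
      apply Real.sin_pos_of_pos_of_lt_pi
      · push_cast; simp only [ha] at hy1; nlinarith
      · push_cast; simp only [hm, ha] at hy2; nlinarith
    have hy0 : y < 0 := by nlinarith
    have hyπ0 : y + π < 0 := by nlinarith
    have hf : f (y + π) < f y := hd (mem_Iio.mpr hy0) (mem_Iio.mpr hyπ0) (by linarith)
    have : h y + h (y + π) = (f y - f (y + π)) * Real.sin y := by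
      simp only [hh, hsin]; ring
    rw [this]
    exact mul_pos (by linarith) hsinpos
  have hab : (∫ x in a..b, h x) = ∫ y in a..m, (h y + h (y + π)) := hcomb
  calc (0:ℝ) < ∫ y in a..m, (h y + h (y + π)) := key
    _ = ∫ x in a..b, h x := hcomb.symm

/-- If `f` is continuous and strictly decreasing on `(−∞, 0)` and `x ↦ f x · sin x`
is Lebesgue integrable on `(−∞, 0)`, then `∫_{−∞}^{0} f(x)·sin(x) dx > 0`. -/
theorem integral_f_mul_sin_pos (f : ℝ → ℝ)
    (hc : ContinuousOn f (Set.Iio 0))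
    (hd : StrictAntiOn f (Set.Iio 0))
    (hi : IntegrableOn (fun x => f x * Real.sin x) (Set.Iio 0)) :
    0 < ∫ x in Set.Iio (0:ℝ), f x * Real.sin x := by
  have hπ : (0:ℝ) < π := Real.pi_pos
  set h : ℝ → ℝ := fun x => f x * Real.sin x with hh
  set s : ℕ → Set ℝ := fun k => Ioc (-(2*π*(k+1))) (-(2*π*k)) with hs
  have hIic : IntegrableOn h (Iic 0) :=
    hi.congr_set_ae Iio_ae_eq_Iic.symm
  have hUnion : (⋃ k, s k) = Iic 0 := by
    ext x
    simp only [mem_iUnion, hs, mem_Ioc, mem_Iic]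
    constructor
    · rintro ⟨k, _, h2⟩
      refine le_trans h2 ?_
      simp only [neg_nonpos]; positivity
    · intro hx
      have hxnn : 0 ≤ (-x)/(2*π) := by
        apply div_nonneg (by linarith) (by positivity)
      have h0 : (0:ℤ) ≤ ⌊(-x)/(2*π)⌋ := Int.floor_nonneg.mpr hxnn
      have he : (⌊(-x)/(2*π)⌋.toNat : ℝ) = (⌊(-x)/(2*π)⌋ : ℝ) := by
        exact_mod_cast congrArg (fun n : ℤ => (n:ℝ)) (Int.toNat_of_nonneg h0)
      refine ⟨⌊(-x) / (2*π)⌋.toNat, ?_, ?_⟩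
      · have h1 : ((-x)/(2*π)) < ⌊(-x)/(2*π)⌋ + 1 := Int.lt_floor_add_one _
        rw [he]
        have := (div_lt_iff₀ (by positivity : (0:ℝ) < 2*π)).mp h1
        nlinarith
      · have h1 : (⌊(-x)/(2*π)⌋ : ℝ) ≤ (-x)/(2*π) := Int.floor_le _
        rw [he]
        have := (le_div_iff₀ (by positivity : (0:ℝ) < 2*π)).mp h1
        linarith
  have hdisj : Pairwise (Function.onFun Disjoint s) := by
    intro i j hij
    rcases hij.lt_or_gt with hlt | hlt
    · apply Set.Ioc_disjoint_Ioc.mpr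
      rw [min_le_iff]
      right
      rw [le_max_iff]; left
      have : (j:ℝ) ≥ (i:ℝ) + 1 := by exact_mod_cast hlt
      nlinarith
    · apply Set.Ioc_disjoint_Ioc.mpr
      rw [min_le_iff]; left
      rw [le_max_iff]; right
      have : (i:ℝ) ≥ (j:ℝ) + 1 := by exact_mod_cast hlt
      nlinarith
  have hiU : IntegrableOn h (⋃ k, s k) := hUnion ▸ hIic
  have hsum : HasSum (fun k => ∫ x in s k, h x) (∫ x in ⋃ k, s k, h x) :=
    hasSum_integral_iUnion (fun k => measurableSet_Ioc) hdisj hiU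
  have hterm : ∀ k, (∫ x in s k, h x) = ∫ x in (-(2*π*(k+1)))..(-(2*π*k)), h x := by
    intro k
    have hk : (0:ℝ) ≤ (k:ℝ) := Nat.cast_nonneg k
    rw [intervalIntegral.integral_of_le (by nlinarith : -(2*π*((k:ℝ)+1)) ≤ -(2*π*(k:ℝ)))]
  have hpos : ∀ k, 0 < ∫ x in s k, h x := by
    intro k
    rw [hterm k]
    exact block_pos f hd hi k
  have h0le : (∫ x in s 0, h x) ≤ ∫ x in ⋃ k, s k, h x :=
    le_hasSum hsum 0 (fun j _ => (hpos j).le)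
  have : 0 < ∫ x in ⋃ k, s k, h x := lt_of_lt_of_le (hpos 0) h0le
  rwa [hUnion, ← setIntegral_congr_set Iio_ae_eq_Iic] at this
end
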